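/- arXiv:1807.00426 — 4 statements merged into one kernel-verified Lean document; each statement's English description precedes it below -/
import Mathlib

section
/- For every p ∈ (0,1) and every n ∈ ℕ, the double series Σ_{j=0}^∞ Σ_{k=0}^{n+j} (min(n,j,k,n+j-k)+1) · p^j · p^k · p^{n+j-k} converges and equals (n+1)·p^n/(1-p²)². -/
lemma key_nat (m N : ℕ) (h : 2 * m ≤ N) :
    ∑ k ∈ Finset.range (N + 1), (min m (min k (N - k)) + 1) = (m + 1) * (N + 1 - m) := by
  induction m with
  | zero => simp
  | succ m ih =>
    have hm : 2 * m ≤ N := by omega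
    have hsplit : ∀ k, min (m + 1) (min k (N - k)) + 1 =
        (min m (min k (N - k)) + 1) + (if m < min k (N - k) then 1 else 0) := by
      intro k; split_ifs with hk <;> omega
    rw [Finset.sum_congr rfl (fun k _ => hsplit k), Finset.sum_add_distrib, ih hm,
      Finset.sum_boole]
    have hfil : (Finset.range (N + 1)).filter (fun k => m < min k (N - k)) =
        Finset.Ico (m + 1) (N - m) := by
      ext k
      simp only [Finset.mem_filter, Finset.mem_range, Finset.mem_Ico, lt_min_iff]
      omega
    rw [hfil, Nat.card_Ico]
    obtain ⟨d, rfl⟩ : ∃ d, N = 2 * m + 2 + d := ⟨N - (2 * m + 2), by omega⟩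
    have e1 : 2 * m + 2 + d + 1 - m = m + 3 + d := by omega
    have e2 : 2 * m + 2 + d - m - (m + 1) = d + 1 := by omega
    have e3 : 2 * m + 2 + d + 1 - (m + 1) = m + 2 + d := by omega
    rw [e1, e2, e3]
    push_cast
    ring

lemma sum_min (n j : ℕ) :
    ∑ k ∈ Finset.range (n + j + 1), ((min (min n j) (min k (n + j - k)) : ℝ) + 1) =
      ((n : ℝ) + 1) * ((j : ℝ) + 1) := by
  have h := key_nat (min n j) (n + j) (by omega)
  have hcast : ∑ k ∈ Finset.range (n + j + 1), ((min (min n j) (min k (n + j - k)) : ℝ) + 1) =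
      ((∑ k ∈ Finset.range (n + j + 1), (min (min n j) (min k (n + j - k)) + 1) : ℕ) : ℝ) := by
    rw [Nat.cast_sum]
    refine Finset.sum_congr rfl fun k hk => ?_
    rw [Finset.mem_range] at hk
    have h1 : ((n + j - k : ℕ) : ℝ) = (n : ℝ) + j - k := by
      rw [Nat.cast_sub (by omega : k ≤ n + j)]; push_cast; ring
    push_cast
    rw [h1]
  rw [hcast, h]
  have : (min n j + 1) * (n + j + 1 - min n j) = (n + 1) * (j + 1) := by
    rcases le_total n j with hnj | hnj
    · rw [min_eq_left hnj]
      have : n + j + 1 - n = j + 1 := by omega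
      rw [this]
    · rw [min_eq_right hnj]
      have : n + j + 1 - j = n + 1 := by omega
      rw [this]; ring
  rw [this]
  push_cast; ring

/-- For `p ∈ (0,1)` and `n ∈ ℕ`, the double series
`Σ_j Σ_{k=0}^{n+j} (min(n,j,k,n+j-k)+1) p^j p^k p^{n+j-k}` converges to `(n+1)p^n/(1-p²)²`. -/
theorem stmt10 (p : ℝ) (hp0 : 0 < p) (hp1 : p < 1) (n : ℕ) :
    Summable (fun j : ℕ => ∑ k ∈ Finset.range (n + j + 1),
      ((min (min n j) (min k (n + j - k)) : ℝ) + 1) * p ^ j * p ^ k * p ^ (n + j - k)) ∧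
    (∑' j : ℕ, ∑ k ∈ Finset.range (n + j + 1),
      ((min (min n j) (min k (n + j - k)) : ℝ) + 1) * p ^ j * p ^ k * p ^ (n + j - k)) =
      ((n : ℝ) + 1) * p ^ n / (1 - p ^ 2) ^ 2 := by
  set r : ℝ := p ^ 2 with hr
  have hr0 : 0 ≤ r := sq_nonneg p
  have hr1 : r < 1 := by nlinarith
  have hrnorm : ‖r‖ < 1 := by rw [Real.norm_eq_abs, abs_of_nonneg hr0]; exact hr1
  have hne : (1 - r) ≠ 0 := by linarith
  -- rewrite each term
  have hf : ∀ j : ℕ, (∑ k ∈ Finset.range (n + j + 1),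
      ((min (min n j) (min k (n + j - k)) : ℝ) + 1) * p ^ j * p ^ k * p ^ (n + j - k)) =
      (((n : ℝ) + 1) * p ^ n) * (((j : ℝ) + 1) * r ^ j) := by
    intro j
    have hterm : ∀ k ∈ Finset.range (n + j + 1),
        ((min (min n j) (min k (n + j - k)) : ℝ) + 1) * p ^ j * p ^ k * p ^ (n + j - k) =
        ((min (min n j) (min k (n + j - k)) : ℝ) + 1) * (p ^ j * p ^ (n + j)) := by
      intro k hk
      rw [Finset.mem_range] at hk
      have : p ^ k * p ^ (n + j - k) = p ^ (n + j) := by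
        rw [← pow_add]
        congr 1
        omega
      linear_combination ((min (min (n:ℝ) (j:ℝ)) (min (k:ℝ) ((n:ℝ) + (j:ℝ) - (k:ℝ))) + 1) * p ^ j) * this
    rw [Finset.sum_congr rfl hterm, ← Finset.sum_mul, sum_min]
    rw [hr, ← pow_mul, pow_add]
    ring
  -- summability of the model series
  have hs1 : Summable (fun j : ℕ => (j : ℝ) * r ^ j) := by
    have := summable_pow_mul_geometric_of_norm_lt_one 1 hrnorm (R := ℝ)
    simpa using this
  have hs2 : Summable (fun j : ℕ => r ^ j) := summable_geometric_of_lt_one hr0 hr1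
  have hs3 : Summable (fun j : ℕ => ((j : ℝ) + 1) * r ^ j) := by
    have := hs1.add hs2
    refine this.congr fun j => ?_
    ring
  have hsum : Summable (fun j : ℕ => (((n : ℝ) + 1) * p ^ n) * (((j : ℝ) + 1) * r ^ j)) :=
    hs3.mul_left _
  constructor
  · exact hsum.congr fun j => (hf j).symm
  · rw [tsum_congr hf, tsum_mul_left]
    have ht : ∑' j : ℕ, ((j : ℝ) + 1) * r ^ j = 1 / (1 - r) ^ 2 := by
      have h1 : ∑' j : ℕ, (j : ℝ) * r ^ j = r / (1 - r) ^ 2 :=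
        tsum_coe_mul_geometric_of_norm_lt_one hrnorm
      have h2 : ∑' j : ℕ, r ^ j = (1 - r)⁻¹ := tsum_geometric_of_lt_one hr0 hr1
      calc ∑' j : ℕ, ((j : ℝ) + 1) * r ^ j
          = ∑' j : ℕ, ((j : ℝ) * r ^ j + r ^ j) := by
            apply tsum_congr; intro j; ring
        _ = (∑' j : ℕ, (j : ℝ) * r ^ j) + ∑' j : ℕ, r ^ j := Summable.tsum_add hs1 hs2
        _ = r / (1 - r) ^ 2 + (1 - r)⁻¹ := by rw [h1, h2]
        _ = 1 / (1 - r) ^ 2 := by field_simp; ring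
    rw [ht]
    field_simp
end

section
/- Fix real numbers c, β, p with 0 < p < 1, and let A_n = c((1-p²)n - β)p^n for n ∈ ℕ. If β = (1 + 5p² ± √(1-14p²+p⁴))/2 with 1-14p²+p⁴ ≥ 0, then Σ_{n=0}^∞ (n+1)(n+2)·A_n·A_{n+1} = 0. -/
/-- For the pair of stationary states `A_n = c((1-p²)n - β)p^n` with
`β = (1 + 5p² ± √(1-14p²+p⁴))/2`, one has `Σ (n+1)(n+2) A_n A_{n+1} = 0`. -/
theorem stmt13 (c β p : ℝ) (hp0 : 0 < p) (hp1 : p < 1)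
    (hdisc : 1 - 14 * p ^ 2 + p ^ 4 ≥ 0)
    (hβ : β = (1 + 5 * p ^ 2 + Real.sqrt (1 - 14 * p ^ 2 + p ^ 4)) / 2 ∨
          β = (1 + 5 * p ^ 2 - Real.sqrt (1 - 14 * p ^ 2 + p ^ 4)) / 2) :
    HasSum (fun n : ℕ => ((n : ℝ) + 1) * ((n : ℝ) + 2) *
      (c * ((1 - p ^ 2) * n - β) * p ^ n) *
      (c * ((1 - p ^ 2) * (n + 1) - β) * p ^ (n + 1))) 0 := by
  set q : ℝ := p ^ 2 with hqdef
  have hs : Real.sqrt (1 - 14 * p ^ 2 + p ^ 4) ^ 2 = 1 - 14 * p ^ 2 + p ^ 4 :=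
    Real.sq_sqrt hdisc
  -- the key quadratic relation satisfied by β
  have hkey : β ^ 2 - (1 + 5 * q) * β + 6 * q * (1 + q) = 0 := by
    rcases hβ with h | h <;> rw [h] <;> simp only [hqdef] <;>
      linear_combination hs / 4
  have hq0 : 0 ≤ q := sq_nonneg p
  have hq1 : q < 1 := by
    rw [hqdef]
    nlinarith
  have hqn : ‖q‖ < 1 := by rw [Real.norm_eq_abs, abs_of_nonneg hq0]; exact hq1
  -- summable building blocks
  have S0 : Summable (fun n : ℕ => (n : ℝ) ^ 0 * q ^ n) :=
    summable_pow_mul_geometric_of_norm_lt_one 0 hqn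
  have S1 : Summable (fun n : ℕ => (n : ℝ) ^ 1 * q ^ n) :=
    summable_pow_mul_geometric_of_norm_lt_one 1 hqn
  have S2 : Summable (fun n : ℕ => (n : ℝ) ^ 2 * q ^ n) :=
    summable_pow_mul_geometric_of_norm_lt_one 2 hqn
  have S3 : Summable (fun n : ℕ => (n : ℝ) ^ 3 * q ^ n) :=
    summable_pow_mul_geometric_of_norm_lt_one 3 hqn
  have S4 : Summable (fun n : ℕ => (n : ℝ) ^ 4 * q ^ n) :=
    summable_pow_mul_geometric_of_norm_lt_one 4 hqn
  -- coefficients of the antidifference polynomial R (times (1-q)^5)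
  set d0 : ℝ := 2*β - 2*β^2 - 12*q + 6*q*β + 4*q*β^2 + 12*q^2 - 18*q^2*β
      - 2*q^2*β^2 + 12*q^3 + 10*q^3*β - 12*q^4 with hd0
  set d1 : ℝ := -2 + 7*β - 3*β^2 - 14*q - 15*q*β + 10*q*β^2 + 52*q^2 + 2*q^2*β
      - 12*q^2*β^2 - 52*q^3 + 14*q^3*β + 6*q^3*β^2 + 14*q^4 - 9*q^4*β - q^4*β^2
      + 2*q^5 + q^5*β with hd1
  set d2 : ℝ := -5 + 7*β - β^2 + 12*q - 29*q*β + 4*q*β^2 + 3*q^2 + 46*q^2*β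
      - 6*q^2*β^2 - 32*q^3 - 34*q^3*β + 4*q^3*β^2 + 33*q^4 + 11*q^4*β - q^4*β^2
      - 12*q^5 - q^5*β + q^6 with hd2
  set d3 : ℝ := (2*β - 4) * (1 - q)^5 with hd3
  set d4 : ℝ := -(1 - q)^6 with hd4
  set R : ℕ → ℝ := fun n => d0 + d1*(n:ℝ) + d2*(n:ℝ)^2 + d3*(n:ℝ)^3 + d4*(n:ℝ)^4
    with hR
  have hR0 : R 0 = 0 := by
    show d0 + d1*((0:ℕ):ℝ) + d2*((0:ℕ):ℝ)^2 + d3*((0:ℕ):ℝ)^3 + d4*((0:ℕ):ℝ)^4 = 0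
    push_cast
    rw [hd0]
    linear_combination (-2 * (1 - q)^2) * hkey
  set F : ℕ → ℝ := fun n : ℕ => ((n : ℝ) + 1) * ((n : ℝ) + 2) *
      (c * ((1 - p ^ 2) * n - β) * p ^ n) *
      (c * ((1 - p ^ 2) * (n + 1) - β) * p ^ (n + 1)) with hF
  -- summability of F
  have ht : ∀ m : ℕ, q ^ m = p ^ m * p ^ m := by
    intro m
    rw [hqdef, ← pow_mul, two_mul, pow_add]
  have hFsummable : Summable F := by
    have base : Summable (fun n : ℕ =>
        (c^2 * p * (2 * (β * (β - 1 + q)))) * ((n:ℝ)^0 * q^n)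
        + ((c^2 * p * (2 * ((1-q)*(1-q-2*β)) + 3 * (β * (β - 1 + q)))) * ((n:ℝ)^1 * q^n)
        + ((c^2 * p * (2 * (1-q)^2 + 3 * ((1-q)*(1-q-2*β)) + (β * (β - 1 + q)))) * ((n:ℝ)^2 * q^n)
        + ((c^2 * p * (3 * (1-q)^2 + (1-q)*(1-q-2*β))) * ((n:ℝ)^3 * q^n)
        + ((c^2 * p * (1-q)^2) * ((n:ℝ)^4 * q^n)))))) :=
      (S0.mul_left _).add ((S1.mul_left _).add ((S2.mul_left _).add
        ((S3.mul_left _).add (S4.mul_left _))))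
    refine base.congr fun n => ?_
    simp only [hF, pow_succ, ht, hqdef]
    ring
  -- partial sums telescope
  have hpart : ∀ N : ℕ, (1 - q)^5 * ∑ i ∈ Finset.range N, F i
      = c^2 * p * (R N * q ^ N - R 0) := by
    intro N
    induction N with
    | zero => simp
    | succ N ih =>
      rw [Finset.sum_range_succ, mul_add, ih]
      have hstep : (1 - q)^5 * F N = c^2 * p * (R (N+1) * q^(N+1) - R N * q^N) := by
        simp only [hF, hR, pow_succ, hd0, hd1, hd2, hd3, hd4, ht, hqdef]
        push_cast
        ring
      rw [hstep]
      ring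
  -- the limit of R N * q^N is 0 (terms of a summable series)
  have hGsummable : Summable (fun n : ℕ => R n * q ^ n) := by
    have base : Summable (fun n : ℕ =>
        d0 * ((n:ℝ)^0 * q^n) + (d1 * ((n:ℝ)^1 * q^n) + (d2 * ((n:ℝ)^2 * q^n)
        + (d3 * ((n:ℝ)^3 * q^n) + d4 * ((n:ℝ)^4 * q^n))))) :=
      (S0.mul_left _).add ((S1.mul_left _).add ((S2.mul_left _).add
        ((S3.mul_left _).add (S4.mul_left _))))
    exact base.congr fun n => by rw [hR]; ring
  have hGlim : Filter.Tendsto (fun n : ℕ => R n * q ^ n) Filter.atTop (nhds 0) :=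
    hGsummable.tendsto_atTop_zero
  -- conclude
  have h1q : (1 - q)^5 ≠ 0 := by
    have h : (0:ℝ) < 1 - q := by linarith
    positivity
  rw [Summable.hasSum_iff_tendsto_nat hFsummable]
  have heq : (fun N : ℕ => ∑ i ∈ Finset.range N, F i)
      = fun N : ℕ => (c^2 * p / (1 - q)^5) * (R N * q ^ N) := by
    funext N
    have := hpart N
    rw [hR0, sub_zero] at this
    field_simp
    rw [eq_div_iff h1q]
    linarith [this]
  rw [heq]
  have : Filter.Tendsto (fun N : ℕ => (c^2 * p / (1 - q)^5) * (R N * q ^ N))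
      Filter.atTop (nhds ((c^2 * p / (1 - q)^5) * 0)) := hGlim.const_mul _
  simpa using this
end

section
/- Let p ∈ (0, 2-√3), c > 0, and β = (1 + 5p² + √(1-14p²+p⁴))/2 (upper sign) or β = (1 + 5p² - √(1-14p²+p⁴))/2 (lower sign). Define A_n = c((1-p²)n - β)p^n, ω = (c²/12)·(1+p² ± √(1-14p²+p⁴))/(1-p²) and λ = (c²/6)·((3-4p²)/(1-p²) ± (3+4p²)√(1-14p²+p⁴)/(1-p²)²). Then Σ_{n=0}^∞ (n+1)·A_n² = (6/7)(λ + ω). -/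
/-!
Writing `A_n = c (a n - β) p^n` with `a = 1 - p²`, `Q = Σ (n+1) A_n²` is
`c² Σ (n+1)(a n - β)² (p²)^n`. The cubic polynomial `(n+1)(a n - β)²` is a combination of the
binomial coefficients `C(n+3,3), C(n+2,2), C(n+1,1)`, whose generating functions are
`(1-x)^{-4}, (1-x)^{-3}, (1-x)^{-2}`; this gives the sum in closed form, convergent because
`p < 2 - √3` forces `p² < 1` (and also `1 - 14p² + p⁴ ≥ 0`). Since `1 - p² = a`, what
remains is a rational identity in `p`, `s` and `√(1-14p²+p⁴)`, using only `s² = 1` and the square of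
the root.
-/

lemma Nat.add_three_choose_three_mul_six (n : ℕ) :
    (n + 3).choose 3 * 6 = (n + 1) * (n + 2) * (n + 3) := by
  have h := Nat.descFactorial_eq_factorial_mul_choose (n + 3) 3
  simp only [Nat.succ_descFactorial_succ, Nat.descFactorial_zero, Nat.factorial] at h
  linarith

lemma Nat.add_two_choose_two_mul_two (n : ℕ) :
    (n + 2).choose 2 * 2 = (n + 1) * (n + 2) := by
  have h := Nat.descFactorial_eq_factorial_mul_choose (n + 2) 2
  simp only [Nat.succ_descFactorial_succ, Nat.descFactorial_zero, Nat.factorial] at h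
  linarith

theorem hasSum_succ_mul_sq_mul_geometric {𝕜 : Type*} [NormedField 𝕜] [HasSummableGeomSeries 𝕜]
    (a b : 𝕜) {r : 𝕜} (hr : ‖r‖ < 1) :
    HasSum (fun n : ℕ => ((n : 𝕜) + 1) * (a * n - b) ^ 2 * r ^ n)
      (6 * a ^ 2 / (1 - r) ^ 4 - (10 * a ^ 2 + 4 * a * b) / (1 - r) ^ 3 +
        (b + 2 * a) ^ 2 / (1 - r) ^ 2) := by
  have expand (n : ℕ) : ((n : 𝕜) + 1) * (a * n - b) ^ 2 * r ^ n =
      6 * a ^ 2 * ((n + 3).choose 3 * r ^ n) -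
        (10 * a ^ 2 + 4 * a * b) * ((n + 2).choose 2 * r ^ n) +
        (b + 2 * a) ^ 2 * ((n + 1).choose 1 * r ^ n) := by
    have h3 : ((n + 3).choose 3 : 𝕜) * 6 = (n + 1) * (n + 2) * (n + 3) := by
      exact_mod_cast congrArg (Nat.cast : ℕ → 𝕜) (Nat.add_three_choose_three_mul_six n)
    have h2 : ((n + 2).choose 2 : 𝕜) * 2 = (n + 1) * (n + 2) := by
      exact_mod_cast congrArg (Nat.cast : ℕ → 𝕜) (Nat.add_two_choose_two_mul_two n)
    simp only [Nat.choose_one_right, Nat.cast_add, Nat.cast_one]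
    linear_combination ((5 * a ^ 2 + 2 * a * b) * r ^ n) * h2 - (a ^ 2 * r ^ n) * h3
  have H k := hasSum_choose_mul_geometric_of_norm_lt_one k hr
  have sum := (((H 3).mul_left (6 * a ^ 2)).sub ((H 2).mul_left (10 * a ^ 2 + 4 * a * b))).add
    ((H 1).mul_left ((b + 2 * a) ^ 2))
  rw [show 6 * a ^ 2 / (1 - r) ^ 4 - (10 * a ^ 2 + 4 * a * b) / (1 - r) ^ 3 +
      (b + 2 * a) ^ 2 / (1 - r) ^ 2 = 6 * a ^ 2 * (1 / (1 - r) ^ (3 + 1)) -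
      (10 * a ^ 2 + 4 * a * b) * (1 / (1 - r) ^ (2 + 1)) + (b + 2 * a) ^ 2 * (1 / (1 - r) ^ (1 + 1))
    by ring]
  exact sum.congr_fun expand

lemma sq_lt_one_and_discriminant_nonneg {p : ℝ} (hp0 : 0 ≤ p) (hp1 : p < 2 - √3) :
    p ^ 2 < 1 ∧ 0 ≤ 1 - 14 * p ^ 2 + p ^ 4 := by
  have h3 : √3 ^ 2 = 3 := Real.sq_sqrt (by norm_num)
  have hsq : p ^ 2 < (2 - √3) ^ 2 := pow_lt_pow_left₀ hp1 hp0 two_ne_zero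
  have h1 : 1 < √3 := by nlinarith [Real.sqrt_nonneg 3]
  refine ⟨by nlinarith, ?_⟩
  have hroot : 4 * √3 < 7 - p ^ 2 := by nlinarith
  nlinarith [mul_pos (by linarith : (0 : ℝ) < 7 - p ^ 2 - 4 * √3)
    (by nlinarith : (0 : ℝ) < 7 - p ^ 2 + 4 * √3)]

theorem geometric_closedForm_eq_six_sevenths_lambda_add_omega {p c s T : ℝ} (hp : p ^ 2 ≠ 1)
    (hs : s ^ 2 = 1) (hT : T ^ 2 = 1 - 14 * p ^ 2 + p ^ 4) :
    let a := 1 - p ^ 2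
    let β := (1 + 5 * p ^ 2 + s * T) / 2
    c ^ 2 * (6 * a ^ 2 / a ^ 4 - (10 * a ^ 2 + 4 * a * β) / a ^ 3 + (β + 2 * a) ^ 2 / a ^ 2) =
      (6 / 7) * (c ^ 2 / 6 * ((3 - 4 * p ^ 2) / (1 - p ^ 2) +
          s * (3 + 4 * p ^ 2) * T / (1 - p ^ 2) ^ 2) +
        c ^ 2 / 12 * ((1 + p ^ 2 + s * T) / (1 - p ^ 2))) := by
  intro a β
  have ha : a ≠ 0 := sub_ne_zero.2 (Ne.symm hp)
  field_simp
  linear_combination (21 * c ^ 2 * T ^ 2 * (1 - p ^ 2) ^ 2) * hs +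
    21 * c ^ 2 * (1 - p ^ 2) ^ 2 * hT

theorem stmt14_general (p c s : ℝ) (hp0 : 0 < p) (hp1 : p < 2 - Real.sqrt 3)
    (hs : s = 1 ∨ s = -1) :
    HasSum (fun n : ℕ => ((n : ℝ) + 1) *
        (c * ((1 - p ^ 2) * n -
          (1 + 5 * p ^ 2 + s * Real.sqrt (1 - 14 * p ^ 2 + p ^ 4)) / 2) * p ^ n) ^ 2)
      ((6 / 7) *
        (c ^ 2 / 6 * ((3 - 4 * p ^ 2) / (1 - p ^ 2) +
          s * (3 + 4 * p ^ 2) * Real.sqrt (1 - 14 * p ^ 2 + p ^ 4) / (1 - p ^ 2) ^ 2) +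
         c ^ 2 / 12 * ((1 + p ^ 2 + s * Real.sqrt (1 - 14 * p ^ 2 + p ^ 4)) / (1 - p ^ 2)))) := by
  obtain ⟨hp2, hdisc⟩ := sq_lt_one_and_discriminant_nonneg hp0.le hp1
  have hr : ‖p ^ 2‖ < 1 := by rwa [Real.norm_of_nonneg (sq_nonneg p)]
  have hs2 : s ^ 2 = 1 := by rcases hs with rfl | rfl <;> norm_num
  have series := (hasSum_succ_mul_sq_mul_geometric (1 - p ^ 2)
    ((1 + 5 * p ^ 2 + s * √(1 - 14 * p ^ 2 + p ^ 4)) / 2) hr).mul_left (c ^ 2)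
  rw [← geometric_closedForm_eq_six_sevenths_lambda_add_omega hp2.ne hs2 (Real.sq_sqrt hdisc)]
  exact series.congr_fun fun n => by ring

/-- For the pair of stationary states `A_n = c((1-p²)n - β)p^n` with the parameters
`β, ω, λ` given by the explicit formulas (either sign `s = ±1`),
`Q(A) = Σ (n+1) A_n² = (6/7)(λ + ω)`. -/
theorem stmt14 (p c s : ℝ) (hp0 : 0 < p) (hp1 : p < 2 - Real.sqrt 3) (hc : 0 < c)
    (hs : s = 1 ∨ s = -1) :
    HasSum (fun n : ℕ => ((n : ℝ) + 1) *
        (c * ((1 - p ^ 2) * n -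
          (1 + 5 * p ^ 2 + s * Real.sqrt (1 - 14 * p ^ 2 + p ^ 4)) / 2) * p ^ n) ^ 2)
      ((6 / 7) *
        (c ^ 2 / 6 * ((3 - 4 * p ^ 2) / (1 - p ^ 2) +
          s * (3 + 4 * p ^ 2) * Real.sqrt (1 - 14 * p ^ 2 + p ^ 4) / (1 - p ^ 2) ^ 2) +
         c ^ 2 / 12 * ((1 + p ^ 2 + s * Real.sqrt (1 - 14 * p ^ 2 + p ^ 4)) / (1 - p ^ 2)))) :=
  stmt14_general p c s hp0 hp1 hs
end

section
/- With the same data as in the previous statement (p ∈ (0, 2-√3), c > 0, A_n = c((1-p²)n - β)p^n with β = (1 + 5p² ± √(1-14p²+p⁴))/2, and ω = (c²/12)·(1+p² ± √(1-14p²+p⁴))/(1-p²)), it holds that Σ_{n=0}^∞ (n+1)²·A_n² = 6ω. -/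
/-!
Writing `q = p²`, the summand is `c² (n+1)² ((1-q) n - β)² qⁿ`. Expanding the quartic
`(n+1)² ((1-q) n - β)²` in the basis `C(n+k, k)`, `k ≤ 4`, and summing the series
`Σ C(n+k, k) qⁿ = (1-q)^{-(k+1)}` gives `((1+q) β² - 4q(2+q) β + 4q(1+4q+q²)) / (1-q)³`.
Since `β` is a root of `X² - (1+5q) X + 6q(1+q)`, whose discriminant is `1 - 14q + q²`, the
numerator collapses to `(1-q)² (β - 2q)`, so the sum is `c² (β - 2q) / (1-q) = 6ω`.
-/

open Nat in
lemma natCast_add_choose_mul_factorial {R : Type*} [CommSemiring R] (n k : ℕ) :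
    ((n + k).choose k : R) * k ! = (n + 1).ascFactorial k := by
  rw [Nat.ascFactorial_eq_factorial_mul_choose, mul_comm]
  push_cast
  rfl

lemma succ_sq_mul_sq_eq_sum_choose {R : Type*} [CommRing R] (a b : R) (n : ℕ) :
    ((n : R) + 1) ^ 2 * (a * n - b) ^ 2 =
      24 * a ^ 2 * (n + 4).choose 4 - (48 * a ^ 2 + 12 * a * b) * (n + 3).choose 3 +
        (28 * a ^ 2 + 16 * a * b + 2 * b ^ 2) * (n + 2).choose 2 -
          (2 * a + b) ^ 2 * (n + 1).choose 1 := by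
  have h4 := natCast_add_choose_mul_factorial (R := R) n 4
  have h3 := natCast_add_choose_mul_factorial (R := R) n 3
  have h2 := natCast_add_choose_mul_factorial (R := R) n 2
  have h1 := natCast_add_choose_mul_factorial (R := R) n 1
  simp only [Nat.ascFactorial_succ, Nat.ascFactorial_zero, Nat.factorial] at h4 h3 h2 h1
  push_cast at h4 h3 h2 h1
  linear_combination (-a ^ 2) * h4 + (8 * a ^ 2 + 2 * a * b) * h3 -
    (14 * a ^ 2 + 8 * a * b + b ^ 2) * h2 + (2 * a + b) ^ 2 * h1

theorem hasSum_succ_sq_mul_sq_mul_geometric {𝕜 : Type*} [NormedField 𝕜] [CompleteSpace 𝕜]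
    {q : 𝕜} (hq : ‖q‖ < 1) (b : 𝕜) :
    HasSum (fun n : ℕ => ((n : 𝕜) + 1) ^ 2 * ((1 - q) * n - b) ^ 2 * q ^ n)
      (((1 + q) * b ^ 2 - 4 * q * (2 + q) * b + 4 * q * (1 + 4 * q + q ^ 2)) / (1 - q) ^ 3) := by
  have hq1 : 1 - q ≠ 0 := sub_ne_zero.2 fun h => by simp [← h] at hq
  have H k := hasSum_choose_mul_geometric_of_norm_lt_one k hq
  convert! ((((H 4).mul_left (24 * (1 - q) ^ 2)).sub ((H 3).mul_left
    (48 * (1 - q) ^ 2 + 12 * (1 - q) * b))).add ((H 2).mul_left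
    (28 * (1 - q) ^ 2 + 16 * (1 - q) * b + 2 * b ^ 2))).sub ((H 1).mul_left
    ((2 * (1 - q) + b) ^ 2)) using 1
  · funext n
    rw [succ_sq_mul_sq_eq_sum_choose]
    ring
  · field_simp
    ring

lemma one_sub_fourteen_mul_sq_add_pow_four_nonneg {p : ℝ} (hp0 : 0 ≤ p) (hp1 : p ≤ 2 - √3) :
    0 ≤ 1 - 14 * p ^ 2 + p ^ 4 := by
  have h3 : √3 ^ 2 = 3 := Real.sq_sqrt (by norm_num)
  have hsmall : 0 ≤ p ^ 2 - 4 * p + 1 := by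
    have hfactor : p ^ 2 - 4 * p + 1 = (2 - √3 - p) * (2 + √3 - p) := by linear_combination h3
    rw [hfactor]
    exact mul_nonneg (by linarith) (by linarith [Real.sqrt_nonneg 3])
  calc (0 : ℝ) ≤ (p ^ 2 - 4 * p + 1) * (p ^ 2 + 4 * p + 1) := mul_nonneg hsmall (by positivity)
    _ = 1 - 14 * p ^ 2 + p ^ 4 := by ring

theorem stmt15_general (p c s : ℝ) (hp0 : 0 < p) (hp1 : p < 2 - Real.sqrt 3)
    (hs : s = 1 ∨ s = -1) :
    HasSum (fun n : ℕ => ((n : ℝ) + 1) ^ 2 *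
        (c * ((1 - p ^ 2) * n -
          (1 + 5 * p ^ 2 + s * Real.sqrt (1 - 14 * p ^ 2 + p ^ 4)) / 2) * p ^ n) ^ 2)
      (6 * (c ^ 2 / 12 *
        ((1 + p ^ 2 + s * Real.sqrt (1 - 14 * p ^ 2 + p ^ 4)) / (1 - p ^ 2)))) := by
  have hp_lt_one : p < 1 := by
    have : 1 < √3 := by simpa using Real.sqrt_lt_sqrt zero_le_one (by norm_num : (1 : ℝ) < 3)
    linarith
  have hq : p ^ 2 < 1 := pow_lt_one₀ hp0.le hp_lt_one two_ne_zero
  have hD := Real.sq_sqrt (one_sub_fourteen_mul_sq_add_pow_four_nonneg hp0.le hp1.le)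
  have hs2 : s ^ 2 = 1 := by rcases hs with rfl | rfl <;> norm_num
  generalize hβ : (1 + 5 * p ^ 2 + s * √(1 - 14 * p ^ 2 + p ^ 4)) / 2 = β
  have hsD : s * √(1 - 14 * p ^ 2 + p ^ 4) = 2 * β - (1 + 5 * p ^ 2) := by rw [← hβ]; ring
  have hβ_root : β ^ 2 = (1 + 5 * p ^ 2) * β - 6 * p ^ 2 * (1 + p ^ 2) := by
    rw [← hβ]
    linear_combination (√(1 - 14 * p ^ 2 + p ^ 4) ^ 2 / 4) * hs2 + hD / 4
  have hq_norm : ‖p ^ 2‖ < 1 := by rwa [Real.norm_eq_abs, abs_of_pos (by positivity)]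
  have hq_ne : 1 - p ^ 2 ≠ 0 := by linarith
  rw [hsD]
  convert! (hasSum_succ_sq_mul_sq_mul_geometric hq_norm β).mul_left (c ^ 2) using 1
  · funext n
    ring
  · field_simp
    linear_combination (-12 * c ^ 2 * (1 + p ^ 2)) * hβ_root

/-- For the same pair of stationary states as in the previous statement,
`E(A) = Σ (n+1)² A_n² = 6ω`. -/
theorem stmt15 (p c s : ℝ) (hp0 : 0 < p) (hp1 : p < 2 - Real.sqrt 3) (hc : 0 < c)
    (hs : s = 1 ∨ s = -1) :
    HasSum (fun n : ℕ => ((n : ℝ) + 1) ^ 2 *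
        (c * ((1 - p ^ 2) * n -
          (1 + 5 * p ^ 2 + s * Real.sqrt (1 - 14 * p ^ 2 + p ^ 4)) / 2) * p ^ n) ^ 2)
      (6 * (c ^ 2 / 12 *
        ((1 + p ^ 2 + s * Real.sqrt (1 - 14 * p ^ 2 + p ^ 4)) / (1 - p ^ 2)))) :=
  stmt15_general p c s hp0 hp1 hs
end
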